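/- Let G_i = {R_i x + ρ_i : ‖Q_i⁻¹x‖_{p_i} ≤ 1} and G_j = {R_j x + ρ_j : ‖Q_j⁻¹x‖_{p_j} ≤ 1} be two general ellipsoids with p_i, p_j > 1, R_i, R_j ∈ SO(d), Q_i, Q_j invertible, and let q_i, q_j be the conjugate exponents. For n ≠ 0 and γ ∈ ℝ, the hyperplane {y : nᵀy = γ} separates G_i and G_j in the sense that nᵀy_i ≥ γ ≥ nᵀy_j for all y_i ∈ G_i, y_j ∈ G_j, if and only if ‖(R_i Q_i)ᵀ n‖_{q_i} ≤ ρ_iᵀ n − γ and ‖−(R_j Q_j)ᵀ n‖_{q_j} ≤ −ρ_jᵀ n + γ. -/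

import Mathlib

open Matrix BigOperators

/-- The p-norm on `Fin d → ℝ`. -/
noncomputable def pnorm {d : ℕ} (p : ℝ) (z : Fin d → ℝ) : ℝ :=
  (∑ i, |z i| ^ p) ^ (1 / p)

/-!
The support function of a `p`-ball is the dual `q`-norm: Hölder's inequality bounds `c ⬝ᵥ z` by
`‖c‖_q` on the unit `p`-ball, and the vector `sign cᵢ (|cᵢ| / ‖c‖_q)^(q-1)` attains the bound.
Since `Q` is invertible, the ellipsoid `{R x + ρ : ‖Q⁻¹ x‖_p ≤ 1}` is the image of the unit
`p`-ball under `z ↦ R Q z + ρ`, so the minimum of `n ⬝ᵥ y` over it is `ρ ⬝ᵥ n - ‖(R Q)ᵀ n‖_q`.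
Both ellipsoids are nonempty, so the hyperplane separates them iff each one lies on its side.
-/

section PNorm

variable {d : ℕ}

lemma pnorm_nonneg (p : ℝ) (z : Fin d → ℝ) : 0 ≤ pnorm p z :=
  Real.rpow_nonneg (Finset.sum_nonneg fun _ _ => Real.rpow_nonneg (abs_nonneg _) _) _

lemma pnorm_neg (p : ℝ) (z : Fin d → ℝ) : pnorm p (-z) = pnorm p z := by
  simp [pnorm]

lemma pnorm_zero {p : ℝ} (hp : p ≠ 0) : pnorm p (0 : Fin d → ℝ) = 0 := by
  simp [pnorm, Real.zero_rpow hp, hp]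

lemma pnorm_rpow {p : ℝ} (hp : p ≠ 0) (z : Fin d → ℝ) : pnorm p z ^ p = ∑ i, |z i| ^ p := by
  rw [pnorm, ← Real.rpow_mul (Finset.sum_nonneg fun _ _ => Real.rpow_nonneg (abs_nonneg _) _),
    one_div_mul_cancel hp, Real.rpow_one]

lemma pnorm_le_pnorm {p : ℝ} (hp : 0 ≤ p) {z w : Fin d → ℝ} (h : ∀ i, |z i| ≤ |w i|) :
    pnorm p z ≤ pnorm p w := by
  refine Real.rpow_le_rpow (Finset.sum_nonneg fun _ _ => Real.rpow_nonneg (abs_nonneg _) _)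
    (Finset.sum_le_sum fun i _ => Real.rpow_le_rpow (abs_nonneg _) (h i) hp) (by positivity)

variable {p q : ℝ}

lemma dotProduct_le_pnorm_mul_pnorm (hpq : p.HolderConjugate q) (c z : Fin d → ℝ) :
    c ⬝ᵥ z ≤ pnorm q c * pnorm p z := by
  rw [mul_comm, dotProduct_comm]
  exact Real.inner_le_Lp_mul_Lq Finset.univ z c hpq

lemma exists_pnorm_le_one_dotProduct_eq (hpq : p.HolderConjugate q) (c : Fin d → ℝ) :
    ∃ z, pnorm p z ≤ 1 ∧ c ⬝ᵥ z = pnorm q c := by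
  set S := pnorm q c
  rcases (pnorm_nonneg q c).eq_or_lt with hS | hS
  · exact ⟨0, by simp [pnorm_zero hpq.ne_zero], by rw [dotProduct_zero]; exact hS⟩
  set t : Fin d → ℝ := fun i => (|c i| / S) ^ (q - 1)
  have ht : ∀ i, 0 ≤ t i := fun i => by positivity
  have hsum : ∑ i, (|c i| / S) ^ q = 1 := by
    rw [Finset.sum_congr rfl fun i _ => Real.div_rpow (abs_nonneg (c i)) hS.le q,
      ← Finset.sum_div, ← pnorm_rpow hpq.symm.ne_zero, div_self (by positivity)]
  have htp : ∀ i, t i ^ p = (|c i| / S) ^ q := fun i => by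
    rw [← Real.rpow_mul (by positivity), hpq.symm.sub_one_mul_conj]
  refine ⟨fun i => SignType.sign (c i) * t i, ?_, ?_⟩
  · calc pnorm p (fun i => SignType.sign (c i) * t i)
        ≤ pnorm p t := pnorm_le_pnorm hpq.nonneg fun i => by
          rw [abs_mul, abs_of_nonneg (ht i)]
          refine mul_le_of_le_one_left (ht i) ?_
          cases SignType.sign (c i) <;> simp
      _ = 1 := by
          simp only [pnorm, abs_of_nonneg (ht _), htp, hsum, Real.one_rpow]
  · have hterm : ∀ i, c i * (SignType.sign (c i) * t i) = S * (|c i| / S) ^ q := fun i => by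
      rw [← mul_assoc, mul_comm (c i), sign_mul_self,
        show q = 1 + (q - 1) by ring,
        Real.rpow_add' (by positivity) (by ring_nf; exact hpq.symm.ne_zero),
        Real.rpow_one, ← mul_assoc, mul_div_cancel₀ _ hS.ne']
    simp only [dotProduct, hterm, ← Finset.mul_sum, hsum, mul_one]

lemma forall_pnorm_le_one_dotProduct_le_iff (hpq : p.HolderConjugate q) (c : Fin d → ℝ) (M : ℝ) :
    (∀ z, pnorm p z ≤ 1 → c ⬝ᵥ z ≤ M) ↔ pnorm q c ≤ M := by
  refine ⟨fun h => ?_, fun h z hz => ?_⟩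
  · obtain ⟨z, hz, hcz⟩ := exists_pnorm_le_one_dotProduct_eq hpq c
    exact hcz ▸ h z hz
  · calc c ⬝ᵥ z ≤ pnorm q c * pnorm p z := dotProduct_le_pnorm_mul_pnorm hpq c z
      _ ≤ pnorm q c * 1 := mul_le_mul_of_nonneg_left hz (pnorm_nonneg q c)
      _ ≤ M := by rwa [mul_one]

lemma forall_pnorm_le_one_le_dotProduct_affine_iff {m : Type*} [Fintype m]
    (hpq : p.HolderConjugate q) (A : Matrix m (Fin d) ℝ) (ρ n : m → ℝ) (γ : ℝ) :
    (∀ z, pnorm p z ≤ 1 → n ⬝ᵥ (A *ᵥ z + ρ) ≥ γ) ↔ pnorm q (Aᵀ *ᵥ n) ≤ ρ ⬝ᵥ n - γ := by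
  have hdot : ∀ z, n ⬝ᵥ (A *ᵥ z + ρ) = ρ ⬝ᵥ n - (Aᵀ *ᵥ n) ⬝ᵥ (-z) := fun z => by
    rw [dotProduct_add, dotProduct_mulVec, mulVec_transpose, dotProduct_neg, dotProduct_comm n]
    ring
  rw [← forall_pnorm_le_one_dotProduct_le_iff hpq]
  refine ⟨fun h z hz => ?_, fun h z hz => ?_⟩
  · have := h (-z) (by rwa [pnorm_neg])
    rw [hdot, neg_neg] at this
    linarith
  · have := h (-z) (by rwa [pnorm_neg])
    rw [hdot]
    linarith

end PNorm

lemma setOf_pnorm_inv_mulVec_le_one_eq_image {d : ℕ} (p : ℝ) {Q : Matrix (Fin d) (Fin d) ℝ}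
    (hQ : IsUnit Q.det) (R : Matrix (Fin d) (Fin d) ℝ) (ρ : Fin d → ℝ) :
    {y | ∃ x : Fin d → ℝ, pnorm p (Q⁻¹ *ᵥ x) ≤ 1 ∧ y = R *ᵥ x + ρ} =
      (fun z => (R * Q) *ᵥ z + ρ) '' {z | pnorm p z ≤ 1} := by
  ext y
  constructor
  · rintro ⟨x, hx, rfl⟩
    exact ⟨Q⁻¹ *ᵥ x, hx, by simp [mulVec_mulVec, mul_assoc, mul_nonsing_inv _ hQ]⟩
  · rintro ⟨z, hz, rfl⟩
    exact ⟨Q *ᵥ z, by simpa [mulVec_mulVec, nonsing_inv_mul _ hQ], by simp [mulVec_mulVec]⟩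

lemma forall_mem_forall_mem_and_iff {α β : Type*} {s : Set α} {t : Set β} {P : α → Prop}
    {Q : β → Prop} (hs : s.Nonempty) (ht : t.Nonempty) :
    (∀ a ∈ s, ∀ b ∈ t, P a ∧ Q b) ↔ (∀ a ∈ s, P a) ∧ ∀ b ∈ t, Q b := by
  obtain ⟨a₀, ha₀⟩ := hs
  obtain ⟨b₀, hb₀⟩ := ht
  exact ⟨fun h => ⟨fun a ha => (h a ha b₀ hb₀).1, fun b hb => (h a₀ ha₀ b hb).2⟩,
    fun h a ha b hb => ⟨h.1 a ha, h.2 b hb⟩⟩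

theorem separating_hyperplane_iff_general {d : ℕ} (pi pj qi qj : ℝ)
    (hpi : 1 < pi) (hpj : 1 < pj)
    (hqi : 1 / pi + 1 / qi = 1) (hqj : 1 / pj + 1 / qj = 1)
    (Ri Qi Rj Qj : Matrix (Fin d) (Fin d) ℝ)
    (hQi : IsUnit Qi.det) (hQj : IsUnit Qj.det)
    (ρi ρj : Fin d → ℝ) (n : Fin d → ℝ) (γ : ℝ)
    (Gi Gj : Set (Fin d → ℝ))
    (hGi : Gi = {y | ∃ x : Fin d → ℝ, pnorm pi (Qi⁻¹ *ᵥ x) ≤ 1 ∧ y = Ri *ᵥ x + ρi})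
    (hGj : Gj = {y | ∃ x : Fin d → ℝ, pnorm pj (Qj⁻¹ *ᵥ x) ≤ 1 ∧ y = Rj *ᵥ x + ρj}) :
    (∀ yi ∈ Gi, ∀ yj ∈ Gj, n ⬝ᵥ yi ≥ γ ∧ γ ≥ n ⬝ᵥ yj) ↔
      (pnorm qi ((Ri * Qi)ᵀ *ᵥ n) ≤ ρi ⬝ᵥ n - γ ∧
        pnorm qj (-((Rj * Qj)ᵀ *ᵥ n)) ≤ -(ρj ⬝ᵥ n) + γ) := by
  have hpqi : pi.HolderConjugate qi := Real.holderConjugate_iff.mpr ⟨hpi, by simpa using hqi⟩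
  have hpqj : pj.HolderConjugate qj := Real.holderConjugate_iff.mpr ⟨hpj, by simpa using hqj⟩
  have image_nonempty : ∀ {p : ℝ} (hp : p ≠ 0) (A : Matrix (Fin d) (Fin d) ℝ) (ρ : Fin d → ℝ),
      ((fun z => A *ᵥ z + ρ) '' {z | pnorm p z ≤ 1}).Nonempty :=
    fun hp A ρ => ⟨ρ, 0, by simp [pnorm_zero hp], by simp⟩
  subst hGi hGj
  rw [setOf_pnorm_inv_mulVec_le_one_eq_image pi hQi, setOf_pnorm_inv_mulVec_le_one_eq_image pj hQj,
    forall_mem_forall_mem_and_iff (image_nonempty hpqi.ne_zero _ _)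
      (image_nonempty hpqj.ne_zero _ _)]
  simp only [Set.forall_mem_image, Set.mem_ofPred_eq]
  refine and_congr (forall_pnorm_le_one_le_dotProduct_affine_iff hpqi _ ρi n γ) ?_
  rw [← mulVec_neg, show -(ρj ⬝ᵥ n) + γ = ρj ⬝ᵥ -n - -γ by rw [dotProduct_neg]; ring,
    ← forall_pnorm_le_one_le_dotProduct_affine_iff hpqj _ ρj (-n) (-γ)]
  simp only [neg_dotProduct, ge_iff_le, neg_le_neg_iff]

/-- Theorem 2: existence conditions of a separating hyperplane for two
general ellipsoids. -/
theorem separating_hyperplane_iff {d : ℕ} (pi pj qi qj : ℝ)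
    (hpi : 1 < pi) (hpj : 1 < pj)
    (hqi : 1 / pi + 1 / qi = 1) (hqj : 1 / pj + 1 / qj = 1)
    (Ri Qi Rj Qj : Matrix (Fin d) (Fin d) ℝ)
    (hRi : Riᵀ * Ri = 1 ∧ Ri.det = 1) (hRj : Rjᵀ * Rj = 1 ∧ Rj.det = 1)
    (hQi : IsUnit Qi.det) (hQj : IsUnit Qj.det)
    (ρi ρj : Fin d → ℝ) (n : Fin d → ℝ) (hn : n ≠ 0) (γ : ℝ)
    (Gi Gj : Set (Fin d → ℝ))
    (hGi : Gi = {y | ∃ x : Fin d → ℝ, pnorm pi (Qi⁻¹ *ᵥ x) ≤ 1 ∧ y = Ri *ᵥ x + ρi})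
    (hGj : Gj = {y | ∃ x : Fin d → ℝ, pnorm pj (Qj⁻¹ *ᵥ x) ≤ 1 ∧ y = Rj *ᵥ x + ρj}) :
    (∀ yi ∈ Gi, ∀ yj ∈ Gj, n ⬝ᵥ yi ≥ γ ∧ γ ≥ n ⬝ᵥ yj) ↔
      (pnorm qi ((Ri * Qi)ᵀ *ᵥ n) ≤ ρi ⬝ᵥ n - γ ∧
        pnorm qj (-((Rj * Qj)ᵀ *ᵥ n)) ≤ -(ρj ⬝ᵥ n) + γ) :=
  separating_hyperplane_iff_general pi pj qi qj hpi hpj hqi hqj Ri Qi Rj Qj hQi hQj ρi ρj n γ Gi Gj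
    hGi hGj
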